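/- Let X and Y be n×n Hermitian complex matrices such that X ≤ (U Y Uᴴ + V Y Vᴴ)/2 in the Loewner order for some n×n unitary matrices U and V. Then for all integers i, j ≥ 0 with i + j + 1 ≤ n, λ_{i+j+1}(X) ≤ (λ_{i+1}(Y) + λ_{j+1}(Y))/2. -/

import Mathlib

/-!
Weyl's dimension count. Let `T`, `A`, `B` be Hermitian on an `n`-dimensional space with
`T ≤ a A + b B` for some `a, b ≥ 0`. The eigenvectors of `A` for `λ_{i+1}(A), …, λ_n(A)` span a
subspace of dimension `n - i` on which `⟪A x, x⟫ ≤ λ_{i+1}(A) ‖x‖²`; likewise for `B` and `j`;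
and the eigenvectors of `T` for its `i + j + 1` largest eigenvalues span a subspace on which
`λ_{i+j+1}(T) ‖x‖² ≤ ⟪T x, x⟫`. The three dimensions add up to `2n + 1 > 2n`, so the subspaces
share a nonzero vector `x`, and evaluating the quadratic forms at `x` gives
`λ_{i+j+1}(T) ≤ a λ_{i+1}(A) + b λ_{j+1}(B)`. Conjugating by a unitary preserves the
characteristic polynomial, hence the eigenvalues, so `A = U Y Uᴴ`, `B = V Y Vᴴ`, `a = b = 1/2`
gives the theorem.
-/

open Matrix
open scoped ComplexOrder

/-- The `j`-th largest eigenvalue of a Hermitian matrix (`0`-indexed, so `eigDesc hA ⟨0, _⟩`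
is the largest), counted with multiplicity. -/
noncomputable def eigDesc {n : ℕ} {A : Matrix (Fin n) (Fin n) ℂ} (hA : A.IsHermitian)
    (j : Fin n) : ℝ :=
  hA.eigenvalues (Tuple.sort hA.eigenvalues j.rev)

/-- Applying a real function to a Hermitian matrix via the functional calculus yields a
Hermitian matrix. -/
lemma isHermitian_cfc {n : ℕ} {A : Matrix (Fin n) (Fin n) ℂ} (hA : A.IsHermitian)
    (f : ℝ → ℝ) : (hA.cfc f).IsHermitian := by
  rw [← hA.cfc_eq]
  exact cfc_predicate f A

lemma isHermitian_half_smul {n : ℕ} {X : Matrix (Fin n) (Fin n) ℂ} (hX : X.IsHermitian) :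
    ((2 : ℝ)⁻¹ • X).IsHermitian := by
  show _ = _
  rw [Matrix.conjTranspose_smul, star_trivial, hX.eq]

lemma isHermitian_sum_conj {m n : ℕ} {A : Fin m → Matrix (Fin n) (Fin n) ℂ}
    (Z : Fin m → Matrix (Fin n) (Fin n) ℂ) (hA : ∀ i, (A i).IsHermitian) :
    (∑ i, (Z i)ᴴ * A i * Z i).IsHermitian := by
  show _ = _
  rw [Matrix.conjTranspose_sum]
  exact Finset.sum_congr rfl fun i _ => (isHermitian_conjTranspose_mul_mul (Z i) (hA i)).eq

open Module RCLike
open scoped InnerProductSpace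

section OrthonormalBasis

variable {𝕜 E ι : Type*} [RCLike 𝕜] [NormedAddCommGroup E] [InnerProductSpace 𝕜 E] [Fintype ι]

theorem OrthonormalBasis.repr_eq_zero_of_mem_span (b : OrthonormalBasis ι 𝕜 E) {S : Set ι}
    {x : E} (hx : x ∈ Submodule.span 𝕜 (b '' S)) {k : ι} (hk : k ∉ S) : b.repr x k = 0 := by
  have hspan : Submodule.span 𝕜 (b '' S) ≤ LinearMap.ker (innerₛₗ 𝕜 (b k)) := by
    refine Submodule.span_le.2 ?_
    rintro _ ⟨l, hl, rfl⟩
    exact b.orthonormal.2 (ne_of_mem_of_not_mem hl hk).symm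
  simpa [b.repr_apply_apply] using hspan hx

theorem OrthonormalBasis.finrank_span_image (b : OrthonormalBasis ι 𝕜 E) (S : Finset ι) :
    finrank 𝕜 (Submodule.span 𝕜 (b '' S)) = S.card := by
  rw [Set.image_eq_range]
  exact (finrank_span_eq_card
    (b.orthonormal.linearIndependent.comp _ Subtype.val_injective)).trans (Fintype.card_coe S)

theorem OrthonormalBasis.norm_sq_eq_sum (b : OrthonormalBasis ι 𝕜 E) (x : E) :
    ‖x‖ ^ 2 = ∑ k, ‖b.repr x k‖ ^ 2 := by
  rw [← b.repr.norm_map, EuclideanSpace.norm_sq_eq]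

end OrthonormalBasis

namespace Submodule

variable {K V : Type*} [DivisionRing K] [AddCommGroup V] [Module K V] [FiniteDimensional K V]

theorem finrank_add_finrank_le_finrank_add_finrank_inf (s t : Submodule K V) :
    finrank K s + finrank K t ≤ finrank K V + finrank K ↥(s ⊓ t) := by
  rw [← finrank_sup_add_finrank_inf_eq]
  exact Nat.add_le_add_right (finrank_le _) _

theorem exists_mem_inf_inf_ne_zero_of_finrank_lt {s t u : Submodule K V}
    (h : 2 * finrank K V < finrank K s + finrank K t + finrank K u) :
    ∃ x ∈ s ⊓ t ⊓ u, x ≠ 0 := by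
  refine exists_mem_ne_zero_of_ne_bot fun hbot => ?_
  have hst := finrank_add_finrank_le_finrank_add_finrank_inf s t
  have hstu := finrank_add_finrank_le_finrank_add_finrank_inf (s ⊓ t) u
  rw [hbot, finrank_bot] at hstu
  omega

end Submodule

namespace LinearMap.IsSymmetric

variable {𝕜 E : Type*} [RCLike 𝕜] [NormedAddCommGroup E] [InnerProductSpace 𝕜 E]
  [FiniteDimensional 𝕜 E] {T : E →ₗ[𝕜] E}

theorem eigenvalues_eq_comp_finCongr (hT : T.IsSymmetric) {m n : ℕ} (hm : finrank 𝕜 E = m)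
    (hn : finrank 𝕜 E = n) (h : m = n) :
    hT.eigenvalues hm = hT.eigenvalues hn ∘ finCongr h := by
  subst h
  rfl

variable {n : ℕ} (hn : finrank 𝕜 E = n)

theorem re_inner_apply_self_eq_sum (hT : T.IsSymmetric) (x : E) :
    re ⟪T x, x⟫_𝕜 = ∑ k, hT.eigenvalues hn k * ‖(hT.eigenvectorBasis hn).repr x k‖ ^ 2 := by
  rw [← (hT.eigenvectorBasis hn).repr.inner_map_map, PiLp.inner_apply, map_sum]
  refine Finset.sum_congr rfl fun k _ => ?_
  rw [hT.eigenvectorBasis_apply_self_apply, inner_apply, map_mul (starRingEnd 𝕜), conj_ofReal,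
    mul_left_comm, mul_conj, ← ofReal_pow, ← ofReal_mul, ofReal_re]

theorem re_inner_apply_self_le_of_mem_span (hT : T.IsSymmetric) {S : Set (Fin n)} {c : ℝ}
    (hc : ∀ k ∈ S, hT.eigenvalues hn k ≤ c) {x : E}
    (hx : x ∈ Submodule.span 𝕜 (hT.eigenvectorBasis hn '' S)) :
    re ⟪T x, x⟫_𝕜 ≤ c * ‖x‖ ^ 2 := by
  rw [hT.re_inner_apply_self_eq_sum hn, (hT.eigenvectorBasis hn).norm_sq_eq_sum, Finset.mul_sum]
  refine Finset.sum_le_sum fun k _ => ?_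
  by_cases hk : k ∈ S
  · exact mul_le_mul_of_nonneg_right (hc k hk) (sq_nonneg _)
  · simp [(hT.eigenvectorBasis hn).repr_eq_zero_of_mem_span hx hk]

theorem le_re_inner_apply_self_of_mem_span (hT : T.IsSymmetric) {S : Set (Fin n)} {c : ℝ}
    (hc : ∀ k ∈ S, c ≤ hT.eigenvalues hn k) {x : E}
    (hx : x ∈ Submodule.span 𝕜 (hT.eigenvectorBasis hn '' S)) :
    c * ‖x‖ ^ 2 ≤ re ⟪T x, x⟫_𝕜 := by
  rw [hT.re_inner_apply_self_eq_sum hn, (hT.eigenvectorBasis hn).norm_sq_eq_sum, Finset.mul_sum]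
  refine Finset.sum_le_sum fun k _ => ?_
  by_cases hk : k ∈ S
  · exact mul_le_mul_of_nonneg_right (hc k hk) (sq_nonneg _)
  · simp [(hT.eigenvectorBasis hn).repr_eq_zero_of_mem_span hx hk]

theorem exists_finrank_eq_forall_re_inner_apply_self_le (hT : T.IsSymmetric) (k : Fin n) :
    ∃ W : Submodule 𝕜 E, finrank 𝕜 W = n - k ∧
      ∀ x ∈ W, re ⟪T x, x⟫_𝕜 ≤ hT.eigenvalues hn k * ‖x‖ ^ 2 := by
  refine ⟨Submodule.span 𝕜 (hT.eigenvectorBasis hn '' (Finset.Ici k : Set (Fin n))), ?_,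
    fun x => hT.re_inner_apply_self_le_of_mem_span hn fun l hl => ?_⟩
  · rw [OrthonormalBasis.finrank_span_image, Fin.card_Ici]
  · exact hT.eigenvalues_antitone hn (Finset.mem_Ici.1 hl)

theorem exists_finrank_eq_forall_le_re_inner_apply_self (hT : T.IsSymmetric) (k : Fin n) :
    ∃ W : Submodule 𝕜 E, finrank 𝕜 W = k + 1 ∧
      ∀ x ∈ W, hT.eigenvalues hn k * ‖x‖ ^ 2 ≤ re ⟪T x, x⟫_𝕜 := by
  refine ⟨Submodule.span 𝕜 (hT.eigenvectorBasis hn '' (Finset.Iic k : Set (Fin n))), ?_,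
    fun x => hT.le_re_inner_apply_self_of_mem_span hn fun l hl => ?_⟩
  · rw [OrthonormalBasis.finrank_span_image, Fin.card_Iic]
  · exact hT.eigenvalues_antitone hn (Finset.mem_Iic.1 hl)

theorem eigenvalues_add_le_of_re_inner_le {A B : E →ₗ[𝕜] E} (hT : T.IsSymmetric)
    (hA : A.IsSymmetric) (hB : B.IsSymmetric) {a b : ℝ} (ha : 0 ≤ a) (hb : 0 ≤ b)
    (h : ∀ x, re ⟪T x, x⟫_𝕜 ≤ a * re ⟪A x, x⟫_𝕜 + b * re ⟪B x, x⟫_𝕜)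
    {i j : ℕ} (hij : i + j < n) :
    hT.eigenvalues hn ⟨i + j, hij⟩ ≤
      a * hA.eigenvalues hn ⟨i, by omega⟩ + b * hB.eigenvalues hn ⟨j, by omega⟩ := by
  obtain ⟨WA, hWA, hAle⟩ := hA.exists_finrank_eq_forall_re_inner_apply_self_le hn ⟨i, by omega⟩
  obtain ⟨WB, hWB, hBle⟩ := hB.exists_finrank_eq_forall_re_inner_apply_self_le hn ⟨j, by omega⟩
  obtain ⟨WT, hWT, hTge⟩ := hT.exists_finrank_eq_forall_le_re_inner_apply_self hn ⟨i + j, hij⟩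
  obtain ⟨x, ⟨⟨hxA, hxB⟩, hxT⟩, hx0⟩ := Submodule.exists_mem_inf_inf_ne_zero_of_finrank_lt
    (s := WA) (t := WB) (u := WT) (by simp only [hWA, hWB, hWT, hn]; omega)
  have hx : 0 < ‖x‖ ^ 2 := by positivity
  refine le_of_mul_le_mul_right ?_ hx
  calc hT.eigenvalues hn ⟨i + j, hij⟩ * ‖x‖ ^ 2 ≤ re ⟪T x, x⟫_𝕜 := hTge x hxT
    _ ≤ a * re ⟪A x, x⟫_𝕜 + b * re ⟪B x, x⟫_𝕜 := h x
    _ ≤ a * (hA.eigenvalues hn ⟨i, _⟩ * ‖x‖ ^ 2) + b * (hB.eigenvalues hn ⟨j, _⟩ * ‖x‖ ^ 2) :=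
      add_le_add (mul_le_mul_of_nonneg_left (hAle x hxA) ha)
        (mul_le_mul_of_nonneg_left (hBle x hxB) hb)
    _ = _ := by ring

end LinearMap.IsSymmetric

theorem Tuple.comp_perm_sort_rev_of_antitone {α : Type*} [LinearOrder α] {n : ℕ}
    {f : Fin n → α} (hf : Antitone f) (σ : Equiv.Perm (Fin n)) (k : Fin n) :
    (f ∘ σ) (Tuple.sort (f ∘ σ) k.rev) = f k := by
  have hsort : f ∘ Tuple.sort f = f ∘ Fin.revPerm :=
    (Tuple.comp_sort_eq_comp_iff_monotone.2 (hf.comp Fin.rev_anti)).symm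
  change ((f ∘ σ) ∘ Tuple.sort (f ∘ σ)) k.rev = f k
  rw [Tuple.comp_perm_comp_sort_eq_comp_sort, hsort]
  simp

namespace Matrix

theorem charpoly_mul_mul_conjTranspose_of_mem_unitaryGroup {α ι : Type*} [CommRing α]
    [StarRing α] [Fintype ι] [DecidableEq ι] {U : Matrix ι ι α} (hU : U ∈ unitaryGroup ι α)
    (Y : Matrix ι ι α) : (U * Y * Uᴴ).charpoly = Y.charpoly := by
  rw [charpoly_mul_comm, ← mul_assoc, show Uᴴ * U = 1 from (mem_unitaryGroup_iff').1 hU,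
    one_mul]

variable {𝕜 ι : Type*} [RCLike 𝕜] [Fintype ι] [DecidableEq ι]

theorem charpoly_toEuclideanLin (M : Matrix ι ι 𝕜) : M.toEuclideanLin.charpoly = M.charpoly := by
  rw [toEuclideanLin_eq_toLin_orthonormal, charpoly_toLin]

theorem eigenvalues_toEuclideanLin_mul_mul_conjTranspose {Y U : Matrix ι ι 𝕜}
    (hY : Y.IsHermitian) (hU : U ∈ unitaryGroup ι 𝕜) {n : ℕ}
    (hn : finrank 𝕜 (EuclideanSpace 𝕜 ι) = n) :
    (isSymmetric_toEuclideanLin_iff.mpr (isHermitian_mul_mul_conjTranspose U hY)).eigenvalues hn =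
      (isSymmetric_toEuclideanLin_iff.mpr hY).eigenvalues hn := by
  rw [LinearMap.IsSymmetric.eigenvalues_eq_eigenvalues_iff, charpoly_toEuclideanLin,
    charpoly_toEuclideanLin, charpoly_mul_mul_conjTranspose_of_mem_unitaryGroup hU]

theorem PosSemidef.re_inner_toEuclideanLin_self_nonneg {M : Matrix ι ι 𝕜} (hM : M.PosSemidef)
    (x : EuclideanSpace 𝕜 ι) : 0 ≤ re ⟪M.toEuclideanLin x, x⟫_𝕜 := by
  rw [inner_re_symm]
  simpa [EuclideanSpace.inner_eq_star_dotProduct, dotProduct_comm] using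
    hM.re_dotProduct_nonneg x.ofLp

theorem re_inner_toEuclideanLin_self_le_of_posSemidef_sub {M N : Matrix ι ι 𝕜}
    (h : (M - N).PosSemidef) (x : EuclideanSpace 𝕜 ι) :
    re ⟪N.toEuclideanLin x, x⟫_𝕜 ≤ re ⟪M.toEuclideanLin x, x⟫_𝕜 := by
  simpa [inner_sub_left] using h.re_inner_toEuclideanLin_self_nonneg x

end Matrix

/- `Matrix.IsHermitian.eigenvalues` is indexed through an arbitrary equivalence
`Fin (Fintype.card (Fin n)) ≃ Fin n`, so it need not be sorted even for `Fin n`; the sorted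
eigenvalues are those of the symmetric operator `toEuclideanLin A`. -/
theorem eigDesc_eq_eigenvalues_toEuclideanLin {n : ℕ} {A : Matrix (Fin n) (Fin n) ℂ}
    (hA : A.IsHermitian) (k : Fin n) :
    eigDesc hA k =
      (isSymmetric_toEuclideanLin_iff.mpr hA).eigenvalues finrank_euclideanSpace_fin k := by
  have hperm : hA.eigenvalues = (isSymmetric_toEuclideanLin_iff.mpr hA).eigenvalues
      finrank_euclideanSpace_fin ∘ ((Fintype.equivOfCardEq (Fintype.card_fin _)).symm.trans
        (finCongr (Fintype.card_fin n))) := by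
    funext i
    exact congrFun (LinearMap.IsSymmetric.eigenvalues_eq_comp_finCongr _ _ _
      (Fintype.card_fin n)) _
  rw [eigDesc, hperm]
  exact Tuple.comp_perm_sort_rev_of_antitone (LinearMap.IsSymmetric.eigenvalues_antitone _ _) _ k

/-- **Remark 1.3 (Weyl-type).** If `X ≤ (U Y Uᴴ + V Y Vᴴ)/2` for some unitaries `U, V`,
then `λ_{i+j+1}(X) ≤ (λ_{i+1}(Y) + λ_{j+1}(Y))/2` for `i, j ≥ 0` (decreasing eigenvalues,
`1`-based indexing). -/
theorem eig_add_le_of_le_mean_unitary_conj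
    {n : ℕ} (X Y : Matrix (Fin n) (Fin n) ℂ) (hX : X.IsHermitian) (hY : Y.IsHermitian)
    (U V : Matrix (Fin n) (Fin n) ℂ)
    (hU : U ∈ Matrix.unitaryGroup (Fin n) ℂ) (hV : V ∈ Matrix.unitaryGroup (Fin n) ℂ)
    (hle : ((2 : ℝ)⁻¹ • (U * Y * Uᴴ + V * Y * Vᴴ) - X).PosSemidef)
    (i j : ℕ) (hij : i + j + 1 ≤ n) :
    eigDesc hX ⟨i + j, by omega⟩ ≤
      (eigDesc hY ⟨i, by omega⟩ + eigDesc hY ⟨j, by omega⟩) / 2 := by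
  have hT := isSymmetric_toEuclideanLin_iff.mpr hX
  have hA := isSymmetric_toEuclideanLin_iff.mpr (isHermitian_mul_mul_conjTranspose U hY)
  have hB := isSymmetric_toEuclideanLin_iff.mpr (isHermitian_mul_mul_conjTranspose V hY)
  have hmean (x : EuclideanSpace ℂ (Fin n)) : re ⟪X.toEuclideanLin x, x⟫_ℂ ≤
      (2 : ℝ)⁻¹ * re ⟪(U * Y * Uᴴ).toEuclideanLin x, x⟫_ℂ +
        (2 : ℝ)⁻¹ * re ⟪(V * Y * Vᴴ).toEuclideanLin x, x⟫_ℂ := by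
    have h := re_inner_toEuclideanLin_self_le_of_posSemidef_sub hle x
    rw [RCLike.real_smul_eq_coe_smul (K := ℂ)] at h
    simpa [inner_add_left, inner_smul_left, mul_add] using h
  have hweyl := hT.eigenvalues_add_le_of_re_inner_le finrank_euclideanSpace_fin hA hB
    (by norm_num) (by norm_num) hmean (show i + j < n by omega)
  rw [eigenvalues_toEuclideanLin_mul_mul_conjTranspose hY hU,
    eigenvalues_toEuclideanLin_mul_mul_conjTranspose hY hV] at hweyl
  simp only [eigDesc_eq_eigenvalues_toEuclideanLin]
  linarith
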